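/- arXiv:2407.20353 — 5 statements merged into one kernel-verified Lean document; each statement's English description precedes it below -/
import Mathlib

section
/- Let K ⊆ ℝ be a nonempty compact set, n₂ ≥ 1 an integer, and L ∈ ℕ with L ≥ 2 and K ⊆ [−(L−2), L−2]. For each grid point w = j/n₂ with j ∈ ℤ and |w| ≤ L, set r(w) = max{k/n₂ : k ∈ ℤ_{≥0}, k/n₂ ≤ dist(w,K)}, and define S = [−L, L] \ ⋃_w D(w, r(w)), where D(x,r) denotes the open ball of radius r about x (empty when r = 0). Then K ⊆ S, and every x ∈ S satisfies dist(x,K) ≤ 2/n₂. -/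
open Metric

/-- The largest nonnegative multiple of `1/n₂` not exceeding `dist(w, K)`. -/
noncomputable def holeRadius (K : Set ℝ) (n₂ : ℕ) (w : ℝ) : ℝ :=
  sSup {q : ℝ | ∃ k : ℕ, q = (k : ℝ) / (n₂ : ℝ) ∧ q ≤ Metric.infDist w K}

/-- The set `S = [-L, L] \ ⋃_w D(w, r(w))`, drilling around each grid point `w = j/n₂`
with `|w| ≤ L` the largest hole whose radius is a multiple of `1/n₂` not exceeding
`dist(w, K)`. -/
noncomputable def drilledSet (K : Set ℝ) (n₂ : ℕ) (L : ℕ) : Set ℝ :=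
  Set.Icc (-(L : ℝ)) (L : ℝ) \
    ⋃ j ∈ {j : ℤ | |(j : ℝ) / (n₂ : ℝ)| ≤ (L : ℝ)},
      Metric.ball ((j : ℝ) / (n₂ : ℝ)) (holeRadius K n₂ ((j : ℝ) / (n₂ : ℝ)))

lemma holeRadius_eq (K : Set ℝ) (n₂ : ℕ) (hn₂ : 1 ≤ n₂) (w : ℝ) :
    holeRadius K n₂ w = (⌊(n₂ : ℝ) * Metric.infDist w K⌋₊ : ℝ) / n₂ := by
  have hn : (0:ℝ) < n₂ := by exact_mod_cast hn₂
  have hd : 0 ≤ Metric.infDist w K := Metric.infDist_nonneg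
  apply le_antisymm
  · refine csSup_le ⟨0, 0, by simp, by simpa using hd⟩ ?_
    rintro q ⟨k, rfl, hk⟩
    have hk' : (k:ℝ) ≤ (n₂:ℝ) * Metric.infDist w K := by
      rw [div_le_iff₀ hn] at hk; linarith [hk]
    have hkf : k ≤ ⌊(n₂ : ℝ) * Metric.infDist w K⌋₊ := Nat.le_floor hk'
    gcongr
  · apply le_csSup
    · exact ⟨Metric.infDist w K, by rintro q ⟨k, rfl, hk⟩; exact hk⟩
    · refine ⟨_, rfl, ?_⟩
      rw [div_le_iff₀ hn, mul_comm]
      exact Nat.floor_le (mul_nonneg Metric.infDist_nonneg hn.le)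

lemma holeRadius_le (K : Set ℝ) (n₂ : ℕ) (hn₂ : 1 ≤ n₂) (w : ℝ) :
    holeRadius K n₂ w ≤ Metric.infDist w K := by
  have hn : (0:ℝ) < n₂ := by exact_mod_cast hn₂
  rw [holeRadius_eq K n₂ hn₂ w, div_le_iff₀ hn, mul_comm]
  exact Nat.floor_le (mul_nonneg Metric.infDist_nonneg hn.le)

lemma lt_holeRadius_add (K : Set ℝ) (n₂ : ℕ) (hn₂ : 1 ≤ n₂) (w : ℝ) :
    Metric.infDist w K < holeRadius K n₂ w + 1 / n₂ := by
  have hn : (0:ℝ) < n₂ := by exact_mod_cast hn₂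
  rw [holeRadius_eq K n₂ hn₂ w, ← add_div, lt_div_iff₀ hn, mul_comm]
  have := Nat.lt_floor_add_one ((n₂ : ℝ) * Metric.infDist w K)
  push_cast
  linarith

theorem stmt1 (K : Set ℝ) (hne : K.Nonempty) (hK : IsCompact K)
    (n₂ : ℕ) (hn₂ : 1 ≤ n₂) (L : ℕ) (hL : 2 ≤ L)
    (hKL : K ⊆ Set.Icc (-((L : ℝ) - 2)) ((L : ℝ) - 2)) :
    K ⊆ drilledSet K n₂ L ∧
      ∀ x ∈ drilledSet K n₂ L, Metric.infDist x K ≤ 2 / (n₂ : ℝ) := by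
  have hn : (0:ℝ) < n₂ := by exact_mod_cast hn₂
  constructor
  · intro k hk
    obtain ⟨h1, h2⟩ := hKL hk
    refine ⟨⟨by linarith, by linarith⟩, ?_⟩
    simp only [Set.mem_iUnion, Metric.mem_ball, not_exists]
    rintro j hj hball
    have h1 : Metric.infDist ((j:ℝ)/n₂) K ≤ dist k ((j:ℝ)/n₂) := by
      rw [dist_comm]; exact Metric.infDist_le_dist_of_mem hk
    have h2 := holeRadius_le K n₂ hn₂ ((j:ℝ)/n₂)
    linarith
  · rintro x ⟨⟨hx1, hx2⟩, hx3⟩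
    set j : ℤ := round ((n₂:ℝ) * x) with hj
    have hround1 : (j:ℝ) ≤ (n₂:ℝ) * x + 1/2 := by exact_mod_cast round_le_add_half ((n₂:ℝ) * x)
    have hround2 : (n₂:ℝ) * x - 1/2 < (j:ℝ) := by exact_mod_cast sub_half_lt_round ((n₂:ℝ) * x)
    have hjle : (j:ℝ) ≤ (n₂:ℝ) * L := by
      have h1 : (j:ℝ) < ((n₂ * L : ℤ) : ℝ) + 1 := by push_cast; nlinarith
      have h2 : j < (n₂ * L : ℤ) + 1 := by exact_mod_cast h1
      have h3 : j ≤ (n₂ * L : ℤ) := by omega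
      exact_mod_cast h3
    have hjge : -((n₂:ℝ) * L) ≤ (j:ℝ) := by
      have h1 : (-(n₂ * L : ℤ) : ℝ) - 1 < (j:ℝ) := by push_cast; nlinarith
      have h2 : -(n₂ * L : ℤ) - 1 < j := by exact_mod_cast h1
      have h3 : -(n₂ * L : ℤ) ≤ j := by omega
      calc -((n₂:ℝ) * L) = ((-(n₂ * L : ℤ) : ℤ) : ℝ) := by push_cast; ring
        _ ≤ (j:ℝ) := by exact_mod_cast h3
    have hwL : |(j:ℝ)/n₂| ≤ (L:ℝ) := by
      rw [abs_div, abs_of_pos hn, div_le_iff₀ hn]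
      rw [abs_le]
      constructor <;> nlinarith
    have hnear : |x - (j:ℝ)/n₂| ≤ 1/(2*n₂) := by
      have h := abs_sub_round ((n₂:ℝ) * x)
      have : x - (j:ℝ)/n₂ = ((n₂:ℝ) * x - j) / n₂ := by field_simp
      rw [this, abs_div, abs_of_pos hn, div_le_div_iff₀ hn (by positivity)]
      nlinarith [h]
    have hnotball : ¬ x ∈ Metric.ball ((j:ℝ)/n₂) (holeRadius K n₂ ((j:ℝ)/n₂)) := by
      intro hb
      exact hx3 (Set.mem_iUnion₂.mpr ⟨j, hwL, hb⟩)
    rw [Metric.mem_ball, not_lt, Real.dist_eq] at hnotball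
    have htri : Metric.infDist x K ≤ Metric.infDist ((j:ℝ)/n₂) K + dist x ((j:ℝ)/n₂) :=
      Metric.infDist_le_infDist_add_dist
    have hlt := lt_holeRadius_add K n₂ hn₂ ((j:ℝ)/n₂)
    rw [Real.dist_eq] at htri
    have : (2:ℝ)/n₂ = 1/(2*n₂) + 1/(2*n₂) + 1/n₂ := by field_simp; ring
    linarith
end

section
/- Let K ⊆ ℝ be a nonempty compact set, let δ_k = 2^{−k} for k ∈ ℕ, and for each k let C_k ⊆ ℝ be a bounded set with K ⊆ C_k and dist(x, K) ≤ δ_k for every x ∈ C_k. Then limsup_{k→∞} log(N_{δ_k}(C_k))/log(1/δ_k) = limsup_{k→∞} log(N_{δ_k}(K))/log(1/δ_k) (the upper box-counting dimension of K computed along the sequence δ_k), and liminf_{k→∞} log(N_{δ_k}(C_k))/log(1/δ_k) = liminf_{k→∞} log(N_{δ_k}(K))/log(1/δ_k) (the lower box-counting dimension of K computed along the sequence δ_k). -/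
open Filter

/-- `N_δ(F)`: the number of δ-mesh intervals `[mδ, (m+1)δ]`, `m ∈ ℤ`, that intersect `F`. -/
noncomputable def meshCount (δ : ℝ) (F : Set ℝ) : ℕ :=
  {m : ℤ | (Set.Icc ((m : ℝ) * δ) (((m : ℝ) + 1) * δ) ∩ F).Nonempty}.ncard

def meshSet (δ : ℝ) (F : Set ℝ) : Set ℤ :=
  {m : ℤ | (Set.Icc ((m : ℝ) * δ) (((m : ℝ) + 1) * δ) ∩ F).Nonempty}

lemma floor_mem_meshSet {δ : ℝ} (hδ : 0 < δ) {F : Set ℝ} {x : ℝ} (hx : x ∈ F) :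
    ⌊x / δ⌋ ∈ meshSet δ F := by
  refine ⟨x, ⟨?_, ?_⟩, hx⟩
  · calc ((⌊x / δ⌋ : ℝ)) * δ ≤ (x / δ) * δ := by
          exact mul_le_mul_of_nonneg_right (Int.floor_le _) hδ.le
      _ = x := div_mul_cancel₀ _ hδ.ne'
  · calc x = (x / δ) * δ := (div_mul_cancel₀ _ hδ.ne').symm
      _ ≤ ((⌊x / δ⌋ : ℝ) + 1) * δ :=
          mul_le_mul_of_nonneg_right (Int.lt_floor_add_one _).le hδ.le

lemma meshSet_subset {δ : ℝ} (hδ : 0 < δ) {F : Set ℝ} {r : ℝ} (hF : F ⊆ Set.Icc (-r) r) :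
    meshSet δ F ⊆ Set.Icc ⌈-r / δ - 1⌉ ⌊r / δ⌋ := by
  rintro m ⟨x, ⟨h1, h2⟩, hxF⟩
  obtain ⟨hx1, hx2⟩ := hF hxF
  constructor
  · rw [Int.ceil_le]
    have : -r / δ ≤ (m : ℝ) + 1 := by
      rw [div_le_iff₀ hδ]; linarith
    linarith
  · rw [Int.le_floor]
    rw [le_div_iff₀ hδ]; linarith

lemma meshSet_finite {δ : ℝ} (hδ : 0 < δ) {F : Set ℝ} (hF : Bornology.IsBounded F) :
    (meshSet δ F).Finite := by
  obtain ⟨r, hr⟩ := hF.subset_closedBall 0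
  have : F ⊆ Set.Icc (-r) r := by
    simpa [Real.closedBall_eq_Icc] using hr
  exact (Set.finite_Icc _ _).subset (meshSet_subset hδ this)

lemma meshCount_eq (δ : ℝ) (F : Set ℝ) : meshCount δ F = (meshSet δ F).ncard := rfl

lemma one_le_meshCount {δ : ℝ} (hδ : 0 < δ) {F : Set ℝ} (hF : Bornology.IsBounded F)
    (hne : F.Nonempty) : 1 ≤ meshCount δ F := by
  obtain ⟨x, hx⟩ := hne
  have : (meshSet δ F).Nonempty := ⟨_, floor_mem_meshSet hδ hx⟩
  exact (Set.ncard_pos (meshSet_finite hδ hF)).mpr this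

lemma meshCount_mono {δ : ℝ} (hδ : 0 < δ) {F G : Set ℝ} (h : F ⊆ G)
    (hG : Bornology.IsBounded G) : meshCount δ F ≤ meshCount δ G :=
  Set.ncard_le_ncard (fun m ⟨x, hx1, hx2⟩ => ⟨x, hx1, h hx2⟩) (meshSet_finite hδ hG)

lemma meshCount_le_five {δ : ℝ} (hδ : 0 < δ) {C K : Set ℝ} (hKb : Bornology.IsBounded K)
    (h : ∀ x ∈ C, ∃ y ∈ K, |x - y| ≤ δ) :
    meshCount δ C ≤ 5 * meshCount δ K := by
  have hfinK : (meshSet δ K).Finite := meshSet_finite hδ hKb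
  set T : Finset ℤ := hfinK.toFinset with hT
  have hsub : meshSet δ C ⊆ ↑(T.biUnion fun j => Finset.Icc (j - 2) (j + 2)) := by
    rintro m ⟨x, ⟨hx1, hx2⟩, hxC⟩
    obtain ⟨y, hyK, hxy⟩ := h x hxC
    have hy1 : (m : ℝ) * δ - δ ≤ y := by
      have := abs_le.mp hxy; linarith [this.1]
    have hy2 : y ≤ ((m : ℝ) + 1) * δ + δ := by
      have := abs_le.mp hxy; linarith [this.2]
    set j : ℤ := ⌊y / δ⌋ with hj
    have hjK : j ∈ meshSet δ K := floor_mem_meshSet hδ hyK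
    have hjle : (j : ℝ) ≤ y / δ := Int.floor_le _
    have hjge : y / δ < (j : ℝ) + 1 := Int.lt_floor_add_one _
    have h1 : (m : ℝ) - 1 ≤ (j : ℝ) + 1 := by
      have : ((m : ℝ) - 1) * δ ≤ y := by linarith
      have := (div_le_div_iff_of_pos_right hδ).mpr this
      rw [mul_div_cancel_right₀ _ hδ.ne'] at this
      linarith
    have h2 : (j : ℝ) ≤ (m : ℝ) + 2 := by
      have : y ≤ ((m : ℝ) + 2) * δ := by linarith
      have := (div_le_div_iff_of_pos_right hδ).mpr this
      rw [mul_div_cancel_right₀ _ hδ.ne'] at this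
      linarith
    simp only [Finset.coe_biUnion, Set.mem_iUnion, Finset.mem_coe, Finset.mem_Icc]
    refine ⟨j, by simpa [hT] using hjK, ?_, ?_⟩
    · have : (j : ℝ) - 2 ≤ (m : ℝ) := by linarith
      exact_mod_cast this
    · have : (m : ℝ) ≤ (j : ℝ) + 2 := by linarith
      exact_mod_cast this
  calc meshCount δ C ≤ (T.biUnion fun j => Finset.Icc (j - 2) (j + 2)).card := by
        rw [meshCount_eq, ← Set.ncard_coe_finset]
        exact Set.ncard_le_ncard hsub (Finset.finite_toSet _)
    _ ≤ ∑ j ∈ T, (Finset.Icc (j - 2) (j + 2)).card := Finset.card_biUnion_le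
    _ = ∑ j ∈ T, 5 := by
        refine Finset.sum_congr rfl fun j _ => ?_
        rw [Int.card_Icc]; omega
    _ = T.card * 5 := by rw [Finset.sum_const, smul_eq_mul]
    _ = 5 * meshCount δ K := by
        rw [meshCount_eq, Set.ncard_eq_toFinset_card _ hfinK]; ring

lemma meshCount_le_real {δ : ℝ} (hδ : 0 < δ) {F : Set ℝ} {r : ℝ} (hr : 0 ≤ r)
    (hF : F ⊆ Set.Icc (-r) r) : (meshCount δ F : ℝ) ≤ 2 * r / δ + 2 := by
  have h1 : meshCount δ F ≤ (Finset.Icc ⌈-r / δ - 1⌉ ⌊r / δ⌋).card := by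
    rw [meshCount_eq, ← Set.ncard_coe_finset, Finset.coe_Icc]
    exact Set.ncard_le_ncard (meshSet_subset hδ hF) (Set.finite_Icc _ _)
  have h2 : ((Finset.Icc ⌈-r / δ - 1⌉ ⌊r / δ⌋).card : ℝ) ≤ 2 * r / δ + 2 := by
    rw [Int.card_Icc]
    have h3 : ((⌊r / δ⌋ + 1 - ⌈-r / δ - 1⌉).toNat : ℤ) = max (⌊r / δ⌋ + 1 - ⌈-r / δ - 1⌉) 0 :=
      Int.toNat_eq_max _
    have h4 : ((⌊r / δ⌋ + 1 - ⌈-r / δ - 1⌉).toNat : ℝ) = max ((⌊r / δ⌋ : ℝ) + 1 - (⌈-r / δ - 1⌉ : ℝ)) 0 := by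
      exact_mod_cast h3
    rw [h4]
    have hfl : (⌊r / δ⌋ : ℝ) ≤ r / δ := Int.floor_le _
    have hcl : -r / δ - 1 ≤ (⌈-r / δ - 1⌉ : ℝ) := Int.le_ceil _
    have hdiv : 0 ≤ r / δ := div_nonneg hr hδ.le
    refine max_le ?_ (by positivity)
    have e1 : -r / δ = -(r / δ) := by ring
    have e2 : 2 * r / δ = r / δ + r / δ := by ring
    linarith
  exact le_trans (by exact_mod_cast h1) h2

private lemma le_of_forall_pos_le_add' {a b : ℝ} (h : ∀ ε : ℝ, 0 < ε → a ≤ b + ε) : a ≤ b := by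
  by_contra hc
  push_neg at hc
  have := h ((a - b) / 2) (by linarith)
  linarith


theorem stmt3 (K : Set ℝ) (hne : K.Nonempty) (hK : IsCompact K)
    (C : ℕ → Set ℝ) (hCb : ∀ k, Bornology.IsBounded (C k))
    (hKC : ∀ k, K ⊆ C k)
    (hdist : ∀ k, ∀ x ∈ C k, Metric.infDist x K ≤ 1 / 2 ^ k) :
    limsup (fun k : ℕ =>
        Real.log (meshCount ((1 : ℝ) / 2 ^ k) (C k) : ℝ) / Real.log ((2 : ℝ) ^ k)) atTop
      = limsup (fun k : ℕ =>
        Real.log (meshCount ((1 : ℝ) / 2 ^ k) K : ℝ) / Real.log ((2 : ℝ) ^ k)) atTop ∧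
    liminf (fun k : ℕ =>
        Real.log (meshCount ((1 : ℝ) / 2 ^ k) (C k) : ℝ) / Real.log ((2 : ℝ) ^ k)) atTop
      = liminf (fun k : ℕ =>
        Real.log (meshCount ((1 : ℝ) / 2 ^ k) K : ℝ) / Real.log ((2 : ℝ) ^ k)) atTop := by
  have hKb : Bornology.IsBounded K := hK.isBounded
  set F : ℕ → ℝ := fun k =>
    Real.log (meshCount ((1 : ℝ) / 2 ^ k) (C k) : ℝ) / Real.log ((2 : ℝ) ^ k) with hFdef
  set G : ℕ → ℝ := fun k =>
    Real.log (meshCount ((1 : ℝ) / 2 ^ k) K : ℝ) / Real.log ((2 : ℝ) ^ k) with hGdef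
  have hδ : ∀ k : ℕ, (0 : ℝ) < 1 / 2 ^ k := fun k => by positivity
  have hbK : ∀ k : ℕ, (1 : ℝ) ≤ (meshCount ((1 : ℝ) / 2 ^ k) K : ℝ) := fun k => by
    exact_mod_cast one_le_meshCount (hδ k) hKb hne
  have hbC : ∀ k : ℕ, (1 : ℝ) ≤ (meshCount ((1 : ℝ) / 2 ^ k) (C k) : ℝ) := fun k => by
    exact_mod_cast one_le_meshCount (hδ k) (hCb k) (hne.mono (hKC k))
  have hmono : ∀ k : ℕ, (meshCount ((1 : ℝ) / 2 ^ k) K : ℝ) ≤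
      (meshCount ((1 : ℝ) / 2 ^ k) (C k) : ℝ) := fun k => by
    exact_mod_cast meshCount_mono (hδ k) (hKC k) (hCb k)
  have h5 : ∀ k : ℕ, (meshCount ((1 : ℝ) / 2 ^ k) (C k) : ℝ) ≤
      5 * (meshCount ((1 : ℝ) / 2 ^ k) K : ℝ) := by
    intro k
    have : meshCount ((1 : ℝ) / 2 ^ k) (C k) ≤ 5 * meshCount ((1 : ℝ) / 2 ^ k) K := by
      refine meshCount_le_five (hδ k) hKb ?_
      intro x hx
      obtain ⟨y, hyK, hdy⟩ := hK.exists_infDist_eq_dist hne x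
      exact ⟨y, hyK, by rw [← Real.dist_eq, ← hdy]; exact hdist k x hx⟩
    exact_mod_cast this
  have hlog2 : (0 : ℝ) < Real.log 2 := Real.log_pos (by norm_num)
  have hLpow : ∀ k : ℕ, Real.log ((2 : ℝ) ^ k) = (k : ℝ) * Real.log 2 := fun k => by
    rw [Real.log_pow]
  have hLpos : ∀ k : ℕ, 1 ≤ k → (0 : ℝ) < Real.log ((2 : ℝ) ^ k) := by
    intro k hk
    rw [hLpow]
    have : (1 : ℝ) ≤ (k : ℝ) := by exact_mod_cast hk
    nlinarith
  have hLnn : ∀ k : ℕ, (0 : ℝ) ≤ Real.log ((2 : ℝ) ^ k) := fun k =>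
    Real.log_nonneg (one_le_pow₀ (by norm_num))
  have h0F : ∀ k, 0 ≤ F k := fun k =>
    div_nonneg (Real.log_nonneg (hbC k)) (hLnn k)
  have h0G : ∀ k, 0 ≤ G k := fun k =>
    div_nonneg (Real.log_nonneg (hbK k)) (hLnn k)
  -- G ≤ F for k ≥ 1
  have hGF : ∀ k : ℕ, 1 ≤ k → G k ≤ F k := by
    intro k hk
    exact div_le_div_of_nonneg_right (Real.log_le_log (by linarith [hbK k]) (hmono k)) (hLpos k hk).le
  -- F ≤ G + log 5 / (k log 2) for k ≥ 1
  have hFG : ∀ k : ℕ, 1 ≤ k →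
      F k ≤ G k + Real.log 5 / ((k : ℝ) * Real.log 2) := by
    intro k hk
    have hbpos : (0 : ℝ) < (meshCount ((1 : ℝ) / 2 ^ k) K : ℝ) := by linarith [hbK k]
    have hlog5 : Real.log ((meshCount ((1 : ℝ) / 2 ^ k) (C k) : ℝ)) ≤
        Real.log 5 + Real.log ((meshCount ((1 : ℝ) / 2 ^ k) K : ℝ)) := by
      rw [← Real.log_mul (by norm_num) hbpos.ne']
      exact Real.log_le_log (by linarith [hbC k]) (h5 k)
    have hL := hLpos k hk
    rw [hLpow] at hL
    calc F k = Real.log ((meshCount ((1 : ℝ) / 2 ^ k) (C k) : ℝ)) / ((k : ℝ) * Real.log 2) := by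
          rw [hFdef]; simp only; rw [hLpow]
      _ ≤ (Real.log 5 + Real.log ((meshCount ((1 : ℝ) / 2 ^ k) K : ℝ))) / ((k : ℝ) * Real.log 2) :=
          div_le_div_of_nonneg_right hlog5 hL.le
      _ = G k + Real.log 5 / ((k : ℝ) * Real.log 2) := by
          rw [hGdef]; simp only; rw [hLpow, add_div]; ring
  -- uniform upper bound on G
  obtain ⟨r₀, hr₀⟩ := hKb.subset_closedBall 0
  set r : ℝ := max r₀ 0 with hrdef
  have hr0 : 0 ≤ r := le_max_right _ _
  have hKr : K ⊆ Set.Icc (-r) r := by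
    intro x hx
    have := hr₀ hx
    rw [Real.closedBall_eq_Icc] at this
    have h1 : 0 - r₀ ≤ x := this.1
    have h2 : x ≤ 0 + r₀ := this.2
    have h3 : r₀ ≤ r := le_max_left _ _
    exact ⟨by linarith, by linarith⟩
  set B : ℝ := Real.log (2 * r + 2) / Real.log 2 + 1 with hBdef
  have hlogr : 0 ≤ Real.log (2 * r + 2) := Real.log_nonneg (by linarith)
  have hGB : ∀ k : ℕ, 1 ≤ k → G k ≤ B := by
    intro k hk
    have hk1 : (1 : ℝ) ≤ (k : ℝ) := by exact_mod_cast hk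
    have hb : (meshCount ((1 : ℝ) / 2 ^ k) K : ℝ) ≤ (2 * r + 2) * 2 ^ k := by
      have h1 := meshCount_le_real (hδ k) hr0 hKr
      have h2 : 2 * r / (1 / 2 ^ k) = 2 * r * 2 ^ k := by
        field_simp
      have h3 : (2 : ℝ) ≤ 2 * 2 ^ k := by
        have : (1 : ℝ) ≤ 2 ^ k := one_le_pow₀ (by norm_num)
        linarith
      rw [h2] at h1
      nlinarith
    have hlogb : Real.log ((meshCount ((1 : ℝ) / 2 ^ k) K : ℝ)) ≤
        Real.log (2 * r + 2) + (k : ℝ) * Real.log 2 := by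
      calc Real.log ((meshCount ((1 : ℝ) / 2 ^ k) K : ℝ)) ≤
            Real.log ((2 * r + 2) * 2 ^ k) := Real.log_le_log (by linarith [hbK k]) hb
        _ = Real.log (2 * r + 2) + (k : ℝ) * Real.log 2 := by
            rw [Real.log_mul (by linarith) (by positivity), Real.log_pow]
    have hL : (0 : ℝ) < (k : ℝ) * Real.log 2 := by nlinarith
    calc G k = Real.log ((meshCount ((1 : ℝ) / 2 ^ k) K : ℝ)) / ((k : ℝ) * Real.log 2) := by
          rw [hGdef]; simp only; rw [hLpow]
      _ ≤ (Real.log (2 * r + 2) + (k : ℝ) * Real.log 2) / ((k : ℝ) * Real.log 2) :=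
          div_le_div_of_nonneg_right hlogb hL.le
      _ = Real.log (2 * r + 2) / ((k : ℝ) * Real.log 2) + 1 := by
          rw [add_div, div_self hL.ne']
      _ ≤ B := by
          rw [hBdef]
          have : Real.log (2 * r + 2) / ((k : ℝ) * Real.log 2) ≤
              Real.log (2 * r + 2) / Real.log 2 := by
            apply div_le_div_of_nonneg_left hlogr hlog2
            nlinarith
          linarith
  have hFB : ∀ k : ℕ, 1 ≤ k → F k ≤ B + Real.log 5 / Real.log 2 := by
    intro k hk
    have hk1 : (1 : ℝ) ≤ (k : ℝ) := by exact_mod_cast hk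
    have hlog5 : 0 ≤ Real.log 5 := Real.log_nonneg (by norm_num)
    have h1 : Real.log 5 / ((k : ℝ) * Real.log 2) ≤ Real.log 5 / Real.log 2 := by
      apply div_le_div_of_nonneg_left hlog5 hlog2
      nlinarith
    exact le_trans (hFG k hk) (add_le_add (hGB k hk) h1)
  -- boundedness facts
  have bddF_le : atTop.IsBoundedUnder (· ≤ ·) F :=
    ⟨B + Real.log 5 / Real.log 2, eventually_map.mpr (eventually_atTop.mpr ⟨1, hFB⟩)⟩
  have bddG_le : atTop.IsBoundedUnder (· ≤ ·) G :=
    ⟨B, eventually_map.mpr (eventually_atTop.mpr ⟨1, hGB⟩)⟩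
  have bddF_ge : atTop.IsBoundedUnder (· ≥ ·) F :=
    ⟨0, eventually_map.mpr (Eventually.of_forall h0F)⟩
  have bddG_ge : atTop.IsBoundedUnder (· ≥ ·) G :=
    ⟨0, eventually_map.mpr (Eventually.of_forall h0G)⟩
  have cobddF_le : atTop.IsCoboundedUnder (· ≤ ·) F := bddF_ge.isCoboundedUnder_le
  have cobddG_le : atTop.IsCoboundedUnder (· ≤ ·) G := bddG_ge.isCoboundedUnder_le
  have cobddF_ge : atTop.IsCoboundedUnder (· ≥ ·) F := bddF_le.isCoboundedUnder_ge
  have cobddG_ge : atTop.IsCoboundedUnder (· ≥ ·) G := bddG_le.isCoboundedUnder_ge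
  have hGFev : ∀ᶠ k in atTop, G k ≤ F k := eventually_atTop.mpr ⟨1, hGF⟩
  -- the error term tends to 0
  have htend : Tendsto (fun k : ℕ => Real.log 5 / ((k : ℝ) * Real.log 2)) atTop (nhds 0) := by
    have heq : (fun k : ℕ => Real.log 5 / ((k : ℝ) * Real.log 2)) =
        fun k : ℕ => (Real.log 5 / Real.log 2) / (k : ℝ) := by
      funext k
      rw [div_div]
      ring_nf
    rw [heq]
    exact tendsto_const_div_atTop_nhds_zero_nat _
  have hFGev : ∀ ε : ℝ, 0 < ε → ∀ᶠ k in atTop, F k ≤ G k + ε := by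
    intro ε hε
    have h1 : ∀ᶠ k : ℕ in atTop, Real.log 5 / ((k : ℝ) * Real.log 2) ≤ ε :=
      htend.eventually (eventually_le_nhds hε)
    filter_upwards [h1, eventually_atTop.mpr ⟨1, hFG⟩] with k hk1 hk2
    linarith
  constructor
  · apply le_antisymm
    · apply le_of_forall_pos_le_add'
      intro ε hε
      have bddGe_le : atTop.IsBoundedUnder (· ≤ ·) (fun k => G k + ε) :=
        ⟨B + ε, eventually_map.mpr (eventually_atTop.mpr ⟨1, fun k hk => by
          have := hGB k hk; linarith⟩)⟩
      calc limsup F atTop ≤ limsup (fun k => G k + ε) atTop :=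
            limsup_le_limsup (hFGev ε hε) cobddF_le bddGe_le
        _ = limsup G atTop + ε := limsup_add_const atTop G ε bddG_le cobddG_le
    · exact limsup_le_limsup hGFev cobddG_le bddF_le
  · apply le_antisymm
    · apply le_of_forall_pos_le_add'
      intro ε hε
      have bddGe_le : atTop.IsBoundedUnder (· ≤ ·) (fun k => G k + ε) :=
        ⟨B + ε, eventually_map.mpr (eventually_atTop.mpr ⟨1, fun k hk => by
          have := hGB k hk; linarith⟩)⟩
      calc liminf F atTop ≤ liminf (fun k => G k + ε) atTop :=
            liminf_le_liminf (hFGev ε hε) bddF_ge bddGe_le.isCoboundedUnder_ge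
        _ = liminf G atTop + ε := liminf_add_const atTop G ε cobddG_ge bddG_ge
    · exact liminf_le_liminf hGFev bddG_ge cobddF_ge
end

section
/- Let 0 ≤ d ≤ 1, let j ≤ k be nonnegative integers, and let K ⊆ C ⊆ ℝ be nonempty compact sets such that dist(x, K) ≤ 2^{−k} for every x ∈ C. Then H^d_{j,k}(K) ≤ H^d_{j,k}(C) ≤ 3 · H^d_{j,k}(K). -/
/-- `ρ_ℓ`: closed dyadic intervals `[2^{-ℓ} m, 2^{-ℓ}(m+1)]`, `m ∈ ℤ`. -/
def dyadicIntervals (l : ℕ) : Set (Set ℝ) :=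
  {I | ∃ m : ℤ, I = Set.Icc ((m : ℝ) / 2 ^ l) (((m : ℝ) + 1) / 2 ^ l)}

/-- `H^d_{j,k}(F)`: the infimum of `Σ |U_i|^d` over finite covers of `F` by dyadic
intervals of levels between `j` and `k`. -/
noncomputable def Hdjk (d : ℝ) (j k : ℕ) (F : Set ℝ) : ℝ :=
  sInf {s : ℝ | ∃ I : Finset (Set ℝ),
    (∀ U ∈ I, ∃ l : ℕ, j ≤ l ∧ l ≤ k ∧ U ∈ dyadicIntervals l) ∧
    F ⊆ ⋃₀ (I : Set (Set ℝ)) ∧ s = ∑ U ∈ I, Metric.diam U ^ d}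

/-- sum over image bounded by sum of composition, for nonneg functions. -/
lemma my_sum_image_le {α β : Type*} [DecidableEq α] [DecidableEq β] (I : Finset α) (f : α → β) (g : β → ℝ)
    (hg : ∀ b, 0 ≤ g b) : ∑ b ∈ I.image f, g b ≤ ∑ a ∈ I, g (f a) := by
  induction I using Finset.induction with
  | empty => simp
  | @insert a s ha ih =>
    rw [Finset.image_insert, Finset.sum_insert ha]
    by_cases h : f a ∈ s.image f
    · rw [Finset.insert_eq_self.mpr h]
      have := hg (f a)
      linarith
    · rw [Finset.sum_insert h]
      linarith

lemma my_sum_union_le {β : Type*} [DecidableEq β] (s t : Finset β) (g : β → ℝ)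
    (hg : ∀ b, 0 ≤ g b) : ∑ b ∈ s ∪ t, g b ≤ ∑ b ∈ s, g b + ∑ b ∈ t, g b := by
  have h1 : s ∪ t = s ∪ (t \ s) := by
    rw [Finset.union_sdiff_self_eq_union]
  rw [h1, Finset.sum_union (Finset.disjoint_sdiff)]
  have : ∑ b ∈ t \ s, g b ≤ ∑ b ∈ t, g b :=
    Finset.sum_le_sum_of_subset_of_nonneg (Finset.sdiff_subset) (fun i _ _ => hg i)
  linarith

theorem stmt4 (d : ℝ) (hd0 : 0 ≤ d) (hd1 : d ≤ 1) (j k : ℕ) (hjk : j ≤ k)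
    (K C : Set ℝ) (hKne : K.Nonempty) (hCne : C.Nonempty)
    (hKc : IsCompact K) (hCc : IsCompact C) (hKC : K ⊆ C)
    (hdist : ∀ x ∈ C, Metric.infDist x K ≤ 1 / 2 ^ k) :
    Hdjk d j k K ≤ Hdjk d j k C ∧ Hdjk d j k C ≤ 3 * Hdjk d j k K := by
  classical
  set S : Set ℝ → Set ℝ := fun F => {s : ℝ | ∃ I : Finset (Set ℝ),
    (∀ U ∈ I, ∃ l : ℕ, j ≤ l ∧ l ≤ k ∧ U ∈ dyadicIntervals l) ∧
    F ⊆ ⋃₀ (I : Set (Set ℝ)) ∧ s = ∑ U ∈ I, Metric.diam U ^ d} with hS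
  have hH : ∀ F, Hdjk d j k F = sInf (S F) := fun F => rfl
  -- nonnegativity of elements
  have hnonneg : ∀ F, ∀ s ∈ S F, (0:ℝ) ≤ s := by
    rintro F s ⟨I, -, -, rfl⟩
    exact Finset.sum_nonneg fun U _ => Real.rpow_nonneg Metric.diam_nonneg d
  have hbdd : ∀ F, BddBelow (S F) := fun F => ⟨0, fun s hs => hnonneg F s hs⟩
  -- existence of a cover of C at level k
  have hpow : (0:ℝ) < 2 ^ k := by positivity
  obtain ⟨r, hr⟩ := hCc.isBounded.subset_closedBall 0
  set I₀ : Finset (Set ℝ) := (Finset.Icc (⌊-(r * 2 ^ k)⌋) (⌊r * 2 ^ k⌋)).image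
    (fun m : ℤ => Set.Icc ((m : ℝ) / 2 ^ k) (((m : ℝ) + 1) / 2 ^ k)) with hI₀
  have hI₀prop : ∀ U ∈ I₀, ∃ l : ℕ, j ≤ l ∧ l ≤ k ∧ U ∈ dyadicIntervals l := by
    intro U hU
    simp only [hI₀, Finset.mem_image] at hU
    obtain ⟨m, -, rfl⟩ := hU
    exact ⟨k, hjk, le_refl k, ⟨m, rfl⟩⟩
  have hI₀cov : C ⊆ ⋃₀ (I₀ : Set (Set ℝ)) := by
    intro x hx
    have hx' : x ∈ Set.Icc (-r) r := by
      have := hr hx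
      rw [Real.closedBall_eq_Icc] at this
      simpa using this
    refine ⟨Set.Icc ((⌊x * 2 ^ k⌋ : ℝ) / 2 ^ k) (((⌊x * 2 ^ k⌋ : ℝ) + 1) / 2 ^ k), ?_, ?_⟩
    · simp only [hI₀, Finset.coe_image, Set.mem_image, Finset.mem_coe, Finset.mem_Icc]
      refine ⟨⌊x * 2 ^ k⌋, ⟨?_, ?_⟩, rfl⟩
      · exact Int.floor_le_floor (by nlinarith [hx'.1])
      · exact Int.floor_le_floor (by nlinarith [hx'.2])
    · constructor
      · rw [div_le_iff₀ hpow]; exact Int.floor_le _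
      · rw [le_div_iff₀ hpow]; exact (Int.lt_floor_add_one _).le
  have hSCne : (S C).Nonempty := ⟨_, I₀, hI₀prop, hI₀cov, rfl⟩
  have hSKne : (S K).Nonempty := ⟨_, I₀, hI₀prop, fun x hx => hI₀cov (hKC hx), rfl⟩
  constructor
  · -- covers of C are covers of K
    refine csInf_le_csInf (hbdd K) hSCne ?_
    rintro s ⟨I, h1, h2, h3⟩
    exact ⟨I, h1, fun x hx => h2 (hKC hx), h3⟩
  · -- H(C) ≤ 3 H(K)
    rw [hH, hH]
    rw [show (3:ℝ) * sInf (S K) = sInf (S K) * 3 by ring, ← div_le_iff₀ (by norm_num : (0:ℝ) < 3)]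
    refine le_csInf hSKne ?_
    rintro s ⟨I, hIprop, hIcov, rfl⟩
    rw [div_le_iff₀ (by norm_num : (0:ℝ) < 3), show (∑ U ∈ I, Metric.diam U ^ d) * 3
      = ∑ U ∈ I, Metric.diam U ^ d + (∑ U ∈ I, Metric.diam U ^ d
        + ∑ U ∈ I, Metric.diam U ^ d) by ring]
    -- shifted intervals
    set fm : Set ℝ → Set ℝ := fun U => Set.Icc (2 * sInf U - sSup U) (sInf U) with hfm
    set fp : Set ℝ → Set ℝ := fun U => Set.Icc (sSup U) (2 * sSup U - sInf U) with hfp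
    have hfacts : ∀ U ∈ I, ∃ l : ℕ, j ≤ l ∧ l ≤ k ∧ ∃ m : ℤ,
        U = Set.Icc ((m : ℝ) / 2 ^ l) (((m : ℝ) + 1) / 2 ^ l) ∧
        fm U = Set.Icc (((m : ℝ) - 1) / 2 ^ l) ((m : ℝ) / 2 ^ l) ∧
        fp U = Set.Icc (((m : ℝ) + 1) / 2 ^ l) (((m : ℝ) + 2) / 2 ^ l) := by
      intro U hU
      obtain ⟨l, hjl, hlk, m, hm⟩ := hIprop U hU
      have hpl : (0:ℝ) < 2 ^ l := by positivity
      have hle : ((m : ℝ)) / 2 ^ l ≤ ((m : ℝ) + 1) / 2 ^ l := by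
        exact div_le_div_of_nonneg_right (by linarith) hpl.le |>.trans_eq rfl
      have hinf : sInf U = (m : ℝ) / 2 ^ l := by rw [hm, csInf_Icc hle]
      have hsup : sSup U = ((m : ℝ) + 1) / 2 ^ l := by rw [hm, csSup_Icc hle]
      refine ⟨l, hjl, hlk, m, hm, ?_, ?_⟩
      · rw [hfm]; simp only []; rw [hinf, hsup]; congr 1; field_simp; ring
      · rw [hfp]; simp only []; rw [hinf, hsup]; congr 1; field_simp; ring
    -- the tripled family covers C
    set I' : Finset (Set ℝ) := I ∪ (I.image fm ∪ I.image fp) with hI'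
    have hI'prop : ∀ U ∈ I', ∃ l : ℕ, j ≤ l ∧ l ≤ k ∧ U ∈ dyadicIntervals l := by
      intro U hU
      simp only [hI', Finset.mem_union, Finset.mem_image] at hU
      rcases hU with hU | ⟨V, hV, rfl⟩ | ⟨V, hV, rfl⟩
      · exact hIprop U hU
      · obtain ⟨l, hjl, hlk, m, -, hfmV, -⟩ := hfacts V hV
        exact ⟨l, hjl, hlk, m - 1, by rw [hfmV]; push_cast; ring_nf⟩
      · obtain ⟨l, hjl, hlk, m, -, -, hfpV⟩ := hfacts V hV
        exact ⟨l, hjl, hlk, m + 1, by rw [hfpV]; push_cast; ring_nf⟩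
    have hI'cov : C ⊆ ⋃₀ (I' : Set (Set ℝ)) := by
      intro x hx
      obtain ⟨y, hyK, hyd⟩ := hKc.exists_infDist_eq_dist hKne x
      have hdxy : |x - y| ≤ 1 / 2 ^ k := by
        rw [← Real.dist_eq, ← hyd]; exact hdist x hx
      obtain ⟨U, hUI, hyU⟩ := hIcov hyK
      obtain ⟨l, hjl, hlk, m, hm, hfmU, hfpU⟩ := hfacts U hUI
      have hpl : (0:ℝ) < 2 ^ l := by positivity
      have hkl : (1:ℝ) / 2 ^ k ≤ 1 / 2 ^ l := by
        apply div_le_div_of_nonneg_left one_pos.le hpl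
        exact pow_le_pow_right₀ (by norm_num) hlk
      have hxy : |x - y| ≤ 1 / 2 ^ l := hdxy.trans hkl
      rw [hm] at hyU
      have hy1 : (m : ℝ) / 2 ^ l ≤ y := hyU.1
      have hy2 : y ≤ ((m : ℝ) + 1) / 2 ^ l := hyU.2
      rw [abs_le] at hxy
      by_cases h1 : x < (m : ℝ) / 2 ^ l
      · refine ⟨fm U, ?_, ?_⟩
        · simp only [hI', Finset.coe_union, Set.mem_union, Finset.coe_image]
          exact Or.inr (Or.inl ⟨U, hUI, rfl⟩)
        · rw [hfmU]
          constructor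
          · have : ((m:ℝ) - 1) / 2 ^ l = (m:ℝ) / 2 ^ l - 1 / 2 ^ l := by ring
            rw [this]; linarith [hxy.1]
          · linarith
      · by_cases h2 : x ≤ ((m : ℝ) + 1) / 2 ^ l
        · refine ⟨U, ?_, by rw [hm]; exact ⟨le_of_not_gt h1, h2⟩⟩
          simp only [hI', Finset.coe_union, Set.mem_union]
          exact Or.inl hUI
        · refine ⟨fp U, ?_, ?_⟩
          · simp only [hI', Finset.coe_union, Set.mem_union, Finset.coe_image]
            exact Or.inr (Or.inr ⟨U, hUI, rfl⟩)
          · rw [hfpU]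
            constructor
            · linarith
            · have : ((m:ℝ) + 2) / 2 ^ l = ((m:ℝ) + 1) / 2 ^ l + 1 / 2 ^ l := by ring
              rw [this]; linarith [hxy.2]
    -- sum bound
    have hgnn : ∀ U : Set ℝ, (0:ℝ) ≤ Metric.diam U ^ d :=
      fun U => Real.rpow_nonneg Metric.diam_nonneg d
    have hdiam : ∀ U ∈ I, Metric.diam (fm U) ^ d = Metric.diam U ^ d
        ∧ Metric.diam (fp U) ^ d = Metric.diam U ^ d := by
      intro U hU
      obtain ⟨l, -, -, m, hm, hfmU, hfpU⟩ := hfacts U hU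
      have hpl : (0:ℝ) < 2 ^ l := by positivity
      have e1 : Metric.diam U = 1 / 2 ^ l := by
        rw [hm, Real.diam_Icc (div_le_div_of_nonneg_right (by linarith) hpl.le)]
        ring
      have e2 : Metric.diam (fm U) = 1 / 2 ^ l := by
        rw [hfmU, Real.diam_Icc (div_le_div_of_nonneg_right (by linarith) hpl.le)]
        ring
      have e3 : Metric.diam (fp U) = 1 / 2 ^ l := by
        rw [hfpU, Real.diam_Icc (div_le_div_of_nonneg_right (by linarith) hpl.le)]
        ring
      rw [e1, e2, e3]; exact ⟨rfl, rfl⟩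
    have hsum : ∑ U ∈ I', Metric.diam U ^ d ≤ ∑ U ∈ I, Metric.diam U ^ d
        + (∑ U ∈ I, Metric.diam U ^ d + ∑ U ∈ I, Metric.diam U ^ d) := by
      refine (my_sum_union_le _ _ _ hgnn).trans ?_
      have h2 : ∑ U ∈ I.image fm ∪ I.image fp, Metric.diam U ^ d
          ≤ ∑ U ∈ I, Metric.diam U ^ d + ∑ U ∈ I, Metric.diam U ^ d := by
        refine (my_sum_union_le _ _ _ hgnn).trans ?_
        have hm1 : ∑ U ∈ I.image fm, Metric.diam U ^ d ≤ ∑ U ∈ I, Metric.diam (fm U) ^ d :=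
          my_sum_image_le I fm _ hgnn
        have hm2 : ∑ U ∈ I.image fp, Metric.diam U ^ d ≤ ∑ U ∈ I, Metric.diam (fp U) ^ d :=
          my_sum_image_le I fp _ hgnn
        have em : ∑ U ∈ I, Metric.diam (fm U) ^ d = ∑ U ∈ I, Metric.diam U ^ d :=
          Finset.sum_congr rfl fun U hU => (hdiam U hU).1
        have ep : ∑ U ∈ I, Metric.diam (fp U) ^ d = ∑ U ∈ I, Metric.diam U ^ d :=
          Finset.sum_congr rfl fun U hU => (hdiam U hU).2
        linarith
      linarith
    calc sInf (S C) ≤ ∑ U ∈ I', Metric.diam U ^ d :=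
          csInf_le (hbdd C) ⟨I', hI'prop, hI'cov, rfl⟩
      _ ≤ _ := hsum
end

section
/- Let K ⊆ ℝ be a compact set with infinitely many connected components. For each n ∈ ℕ, let C_n ⊆ ℝ be a union of M_n ∈ ℕ pairwise disjoint closed intervals such that K ⊆ C_n, every one of these intervals intersects K, and sup_{x∈C_n} dist(x, K) → 0 as n → ∞. Then M_n → ∞ as n → ∞. -/
open Filter

private lemma sep_aux (K : Set ℝ) (x y : ℝ) (hx : x ∈ K) (hy : y ∈ K)
    (h : connectedComponentIn K x ≠ connectedComponentIn K y) :
    ∃ z, z ∉ K ∧ z ∈ Set.Icc (min x y) (max x y) := by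
  by_contra h'
  push_neg at h'
  have hsub : Set.Icc (min x y) (max x y) ⊆ K := fun z hz => by
    by_contra hzK; exact h' z hzK hz
  have hxm : x ∈ Set.Icc (min x y) (max x y) :=
    ⟨min_le_left _ _, le_max_left _ _⟩
  have hym : y ∈ Set.Icc (min x y) (max x y) :=
    ⟨min_le_right _ _, le_max_right _ _⟩
  have hmem : y ∈ connectedComponentIn K x :=
    (isPreconnected_Icc.subset_connectedComponentIn hxm hsub) hym
  exact h (connectedComponentIn_eq hmem)

theorem stmt6 (K : Set ℝ) (hK : IsCompact K)
    (hinf : {C : Set ℝ | ∃ x ∈ K, C = connectedComponentIn K x}.Infinite)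
    (M : ℕ → ℕ) (I : (n : ℕ) → Fin (M n) → Set ℝ)
    (hIcc : ∀ n m, ∃ a b : ℝ, I n m = Set.Icc a b)
    (hdisj : ∀ n, Pairwise (Function.onFun Disjoint (I n)))
    (hcover : ∀ n, K ⊆ ⋃ m, I n m)
    (hmeet : ∀ n m, (I n m ∩ K).Nonempty)
    (hconv : ∀ ε > (0 : ℝ), ∀ᶠ n in atTop, ∀ x ∈ ⋃ m, I n m, Metric.infDist x K ≤ ε) :
    Tendsto M atTop atTop := by
  classical
  rw [tendsto_atTop_atTop]
  intro N
  rcases Nat.eq_zero_or_pos N with rfl | hN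
  · exact ⟨0, fun n _ => Nat.zero_le _⟩
  have hKne : K.Nonempty := by
    obtain ⟨C, hC⟩ := hinf.nonempty
    obtain ⟨x, hx, -⟩ := hC
    exact ⟨x, hx⟩
  obtain ⟨s, hs_sub, hs_card⟩ := hinf.exists_subset_card_eq N
  have hpt : ∀ C ∈ s, ∃ x, x ∈ K ∧ C = connectedComponentIn K x := by
    intro C hC
    obtain ⟨x, hx, hCx⟩ := hs_sub hC
    exact ⟨x, hx, hCx⟩
  choose! p hpK hpC using hpt
  have hsepz : ∀ C ∈ s, ∀ D ∈ s, C ≠ D →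
      ∃ z, z ∉ K ∧ z ∈ Set.Icc (min (p C) (p D)) (max (p C) (p D)) := by
    intro C hC D hD hne
    refine sep_aux K (p C) (p D) (hpK C hC) (hpK D hD) ?_
    rw [← hpC C hC, ← hpC D hD]
    exact hne
  choose! z hzK hzI using hsepz
  -- the candidate distances
  set t : Finset ℝ :=
    insert 1 (((s ×ˢ s).filter fun q => q.1 ≠ q.2).image
      fun q => Metric.infDist (z q.1 q.2) K) with ht
  have htne : t.Nonempty := ⟨1, Finset.mem_insert_self _ _⟩
  set ε : ℝ := t.min' htne with hε
  have hεpos : 0 < ε := by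
    have hmem := t.min'_mem htne
    rw [← hε] at hmem
    rcases Finset.mem_insert.1 hmem with h1 | h2
    · rw [h1]; norm_num
    · obtain ⟨q, hq, hq2⟩ := Finset.mem_image.1 h2
      rw [Finset.mem_filter, Finset.mem_product] at hq
      rw [← hq2]
      refine (IsClosed.notMem_iff_infDist_pos hK.isClosed hKne).1 ?_
      exact hzK q.1 hq.1.1 q.2 hq.1.2 hq.2
  have hεle : ∀ C ∈ s, ∀ D ∈ s, C ≠ D → ε ≤ Metric.infDist (z C D) K := by
    intro C hC D hD hne
    apply Finset.min'_le
    refine Finset.mem_insert_of_mem (Finset.mem_image.2 ⟨(C, D), ?_, rfl⟩)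
    rw [Finset.mem_filter, Finset.mem_product]
    exact ⟨⟨hC, hD⟩, hne⟩
  obtain ⟨n0, hn0⟩ := (hconv (ε/2) (by linarith)).exists_forall_of_atTop
  refine ⟨n0, fun n hn => ?_⟩
  have hgex : ∀ C ∈ s, ∃ m, p C ∈ I n m := fun C hC =>
    Set.mem_iUnion.1 (hcover n (hpK C hC))
  have hsne : s.Nonempty := Finset.card_pos.1 (hs_card ▸ hN)
  have : Nonempty (Fin (M n)) := by
    obtain ⟨C, hC⟩ := hsne
    obtain ⟨m, -⟩ := hgex C hC
    exact ⟨m⟩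
  choose! g hg using hgex
  have hinj : Set.InjOn g s := by
    intro C hC D hD hgCD
    by_contra hne
    obtain ⟨a, b, hab⟩ := hIcc n (g C)
    have hpC' : p C ∈ Set.Icc a b := hab ▸ hg C hC
    have hpD' : p D ∈ Set.Icc a b := by
      rw [← hab, hgCD]; exact hg D hD
    have hz' : z C D ∈ Set.Icc a b := by
      obtain ⟨h1, h2⟩ := hzI C hC D hD hne
      constructor
      · exact le_trans (le_min hpC'.1 hpD'.1) h1
      · exact le_trans h2 (max_le hpC'.2 hpD'.2)
    have hzU : z C D ∈ ⋃ m, I n m :=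
      Set.mem_iUnion.2 ⟨g C, hab ▸ hz'⟩
    have h1 := hn0 n hn (z C D) hzU
    have h2 := hεle C hC D hD hne
    linarith
  calc N = s.card := hs_card.symm
    _ ≤ (Finset.univ : Finset (Fin (M n))).card :=
        Finset.card_le_card_of_injOn g (fun a _ => Finset.mem_univ _) hinj
    _ = M n := by simp
end

section
/- Let K ⊆ ℝ be a nonempty compact set with exactly N connected components, N ∈ ℕ finite. For each n ∈ ℕ, let C_n ⊆ ℝ be a union of M_n ∈ ℕ pairwise disjoint closed intervals such that K ⊆ C_n, every one of these intervals intersects K, and sup_{x∈C_n} dist(x, K) → 0 as n → ∞. Then M_n = N for all sufficiently large n. -/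
open Filter

theorem stmt7 (K : Set ℝ) (hne : K.Nonempty) (hK : IsCompact K) (N : ℕ)
    (hfin : {C : Set ℝ | ∃ x ∈ K, C = connectedComponentIn K x}.Finite)
    (hN : {C : Set ℝ | ∃ x ∈ K, C = connectedComponentIn K x}.ncard = N)
    (M : ℕ → ℕ) (I : (n : ℕ) → Fin (M n) → Set ℝ)
    (hIcc : ∀ n m, ∃ a b : ℝ, I n m = Set.Icc a b)
    (hdisj : ∀ n, Pairwise (Function.onFun Disjoint (I n)))
    (hcover : ∀ n, K ⊆ ⋃ m, I n m)
    (hmeet : ∀ n m, (I n m ∩ K).Nonempty)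
    (hconv : ∀ ε > (0 : ℝ), ∀ᶠ n in atTop, ∀ x ∈ ⋃ m, I n m, Metric.infDist x K ≤ ε) :
    ∀ᶠ n in atTop, M n = N := by
  classical
  set S : Set (Set ℝ) := {C : Set ℝ | ∃ x ∈ K, C = connectedComponentIn K x} with hS
  have hIclosed : ∀ n m, IsClosed (I n m) := by
    intro n m
    obtain ⟨a, b, hab⟩ := hIcc n m
    rw [hab]; exact isClosed_Icc
  -- Key lemma: a preconnected subset of K meeting I n m is contained in I n m.
  have keyA : ∀ n (C : Set ℝ), IsPreconnected C → C ⊆ K → ∀ m,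
      (C ∩ I n m).Nonempty → C ⊆ I n m := by
    intro n C hC hCK m hmeetC
    set v : Set ℝ := ⋃ m' : {m' : Fin (M n) // m' ≠ m}, I n m'.1 with hv
    have hvclosed : IsClosed v := isClosed_iUnion_of_finite fun m' => hIclosed n m'.1
    have hsub : C ⊆ I n m ∪ v := by
      intro z hz
      obtain ⟨m', hm'⟩ := Set.mem_iUnion.mp (hcover n (hCK hz))
      by_cases h : m' = m
      · exact Or.inl (h ▸ hm')
      · exact Or.inr (Set.mem_iUnion.mpr ⟨⟨m', h⟩, hm'⟩)
    have hempty : C ∩ (I n m ∩ v) = ∅ := by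
      ext z
      simp only [Set.mem_inter_iff, Set.mem_empty_iff_false, iff_false, not_and]
      intro _ hzm hzv
      obtain ⟨m', hm'⟩ := Set.mem_iUnion.mp hzv
      exact Set.disjoint_left.mp (hdisj n m'.2) hm' hzm
    rcases isPreconnected_iff_subset_of_disjoint_closed.mp hC (I n m) v (hIclosed n m)
      hvclosed hsub hempty with h | h
    · exact h
    · exfalso
      obtain ⟨z, hzC, hzm⟩ := hmeetC
      obtain ⟨m', hm'⟩ := Set.mem_iUnion.mp (h hzC)
      exact Set.disjoint_left.mp (hdisj n m'.2) hm' hzm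
  have hSfin : Finite S := hfin.to_subtype
  -- M n ≤ N for all n
  have hle : ∀ n, M n ≤ N := by
    intro n
    have hx : ∀ m : Fin (M n), ∃ x, x ∈ I n m ∩ K := hmeet n
    choose x hxI using hx
    let f : Fin (M n) → S := fun m =>
      ⟨connectedComponentIn K (x m), ⟨x m, (hxI m).2, rfl⟩⟩
    have hf : Function.Injective f := by
      intro m₁ m₂ hfm
      have heq : connectedComponentIn K (x m₁) = connectedComponentIn K (x m₂) :=
        congrArg Subtype.val hfm
      by_contra hmm
      have hC1 : connectedComponentIn K (x m₁) ⊆ I n m₁ :=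
        keyA n _ (isPreconnected_connectedComponentIn) (connectedComponentIn_subset K _)
          m₁ ⟨x m₁, mem_connectedComponentIn (hxI m₁).2, (hxI m₁).1⟩
      have hx2 : x m₂ ∈ I n m₁ := by
        rw [heq] at hC1
        exact hC1 (mem_connectedComponentIn (hxI m₂).2)
      exact Set.disjoint_left.mp (hdisj n hmm) hx2 (hxI m₂).1
    calc M n = Nat.card (Fin (M n)) := by simp
    _ ≤ Nat.card S := Nat.card_le_card_of_injective f hf
    _ = N := by rw [Nat.card_coe_set_eq, hN]
  -- For each pair of distinct components, eventually no single interval contains both.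
  have pair : ∀ C₁ ∈ S, ∀ C₂ ∈ S, C₁ ≠ C₂ →
      ∀ᶠ n in atTop, ∀ m, ¬(C₁ ⊆ I n m ∧ C₂ ⊆ I n m) := by
    rintro C₁ ⟨x, hxK, rfl⟩ C₂ ⟨y, hyK, rfl⟩ hne12
    -- find a point between x and y not in K
    have ht : ∃ t ∈ Set.uIcc x y, t ∉ K := by
      by_contra h
      push_neg at h
      have huIcc : Set.uIcc x y ⊆ connectedComponentIn K x :=
        isPreconnected_uIcc.subset_connectedComponentIn Set.left_mem_uIcc h
      exact hne12 (connectedComponentIn_eq (huIcc Set.right_mem_uIcc))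
    obtain ⟨t, htmem, htK⟩ := ht
    have hδ : 0 < Metric.infDist t K := (hK.isClosed.notMem_iff_infDist_pos hne).mp htK
    filter_upwards [hconv (Metric.infDist t K / 2) (by linarith)] with n hn
    rintro m ⟨h1, h2⟩
    obtain ⟨a, b, hab⟩ := hIcc n m
    have hxm : x ∈ Set.Icc a b := hab ▸ h1 (mem_connectedComponentIn hxK)
    have hym : y ∈ Set.Icc a b := hab ▸ h2 (mem_connectedComponentIn hyK)
    have htm : t ∈ I n m := by
      rw [hab]
      exact Set.ordConnected_Icc.uIcc_subset hxm hym htmem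
    have := hn t (Set.mem_iUnion.mpr ⟨m, htm⟩)
    linarith
  have hall : ∀ᶠ n in atTop, ∀ C₁ ∈ S, ∀ C₂ ∈ S, C₁ ≠ C₂ →
      ∀ m, ¬(C₁ ⊆ I n m ∧ C₂ ⊆ I n m) := by
    rw [eventually_all_finite hfin]
    intro C₁ hC₁
    rw [eventually_all_finite hfin]
    intro C₂ hC₂
    by_cases h : C₁ = C₂
    · exact Eventually.of_forall fun n hn => absurd h hn
    · filter_upwards [pair C₁ hC₁ C₂ hC₂ h] with n hn _
      exact hn
  filter_upwards [hall] with n hn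
  refine le_antisymm (hle n) ?_
  -- injective map from S to Fin (M n)
  have hg : ∀ C : S, ∃ m, (C : Set ℝ) ⊆ I n m := by
    rintro ⟨C, x, hxK, rfl⟩
    have hxC : x ∈ connectedComponentIn K x := mem_connectedComponentIn hxK
    obtain ⟨m, hm⟩ := Set.mem_iUnion.mp (hcover n hxK)
    exact ⟨m, keyA n _ isPreconnected_connectedComponentIn (connectedComponentIn_subset K _)
      m ⟨x, hxC, hm⟩⟩
  choose g hgm using hg
  have hginj : Function.Injective g := by
    intro C₁ C₂ hgC
    by_contra hCC
    have hne' : (C₁ : Set ℝ) ≠ (C₂ : Set ℝ) := fun h => hCC (Subtype.ext h)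
    exact hn C₁ C₁.2 C₂ C₂.2 hne' (g C₁) ⟨hgm C₁, hgC ▸ hgm C₂⟩
  calc N = Nat.card S := by rw [Nat.card_coe_set_eq, hN]
  _ ≤ Nat.card (Fin (M n)) := Nat.card_le_card_of_injective g hginj
  _ = M n := by simp
end
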